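/- Let W be a Wahl chain for coprime integers 0 < a < n, i.e., the HJ continued fraction of n²/(na-1). Write n/a = [y_1,...,y_v] and n/(n-a) = [x_1,...,x_u] as HJ continued fractions. Then the dual chain of W (the HJ expansion of n²/(n²-na+1)) equals [x_1,...,x_u,2,y_v,...,y_1], and moreover W = [y_1,...,y_{v-1},y_v+x_u,x_{u-1},...,x_1]. -/

import Mathlib

/-- The value of a Hirzebruch–Jung continued fraction `[e₁,…,e_r]`,
computed as `e₁ - 1/[e₂,…,e_r]` with `[e_r] = e_r`. -/
def hjVal : List ℤ → ℚ
  | [] => 0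
  | [x] => (x : ℚ)
  | x :: y :: xs => (x : ℚ) - (hjVal (y :: xs))⁻¹

/-- `IsHJ m q L` : `L` is the HJ continued fraction expansion of `m/q`
(all entries at least 2 and value `m/q`). -/
def IsHJ (m q : ℤ) (L : List ℤ) : Prop :=
  (∀ e ∈ L, 2 ≤ e) ∧ hjVal L = (m : ℚ) / (q : ℚ)

/-- `IsWahlChain n a L` : `L` is the Wahl chain of `n²/(na-1)` for coprime `0 < a < n`. -/
def IsWahlChain (n a : ℤ) (L : List ℤ) : Prop :=
  0 < a ∧ a < n ∧ Int.gcd n a = 1 ∧ IsHJ (n ^ 2) (n * a - 1) L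

/-!
Encode a chain `[e₁, …, e_r]` by `M = ∏ !![eᵢ, -1; 1, 0]`, a matrix of determinant one whose
first column is `(m, q)` exactly when the chain is the expansion of `m / q` (`m, q` coprime).
Reversing the chain turns `M = !![m, -b; q, d]` into `!![m, -q; b, d]`, and `0 < b < m`.
For the chains of `n / a` and `n / (n - a)` the entries `b` are the inverses of `a` and `-a`
modulo `n`, so they add up to `n`. The candidate dual chain has matrix
`M_X * M(2) * M_{rev Y}`, and the candidate Wahl chain has matrix `-(M_Y * M(0) * M_{rev X})`
because `M(y + x) = -(M(y) * M(0) * M(x))`. Their first columns come out as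
`(n², n² - n a + 1)` and `(n², n a - 1)`, and HJ expansions are unique.
-/

open Matrix

lemma hjVal_cons (x : ℤ) (xs : List ℤ) : hjVal (x :: xs) = x - (hjVal xs)⁻¹ := by
  cases xs <;> simp [hjVal]

def hjMat (e : ℤ) : Matrix (Fin 2) (Fin 2) ℤ := !![e, -1; 1, 0]

def hjMatProd (L : List ℤ) : Matrix (Fin 2) (Fin 2) ℤ := (L.map hjMat).prod

@[simp] lemma hjMatProd_nil : hjMatProd [] = 1 := rfl

@[simp] lemma hjMatProd_cons (x : ℤ) (L : List ℤ) :
    hjMatProd (x :: L) = hjMat x * hjMatProd L := List.prod_cons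

@[simp] lemma hjMatProd_append (L₁ L₂ : List ℤ) :
    hjMatProd (L₁ ++ L₂) = hjMatProd L₁ * hjMatProd L₂ := by
  simp [hjMatProd]

lemma hjMatProd_cons_zero_zero (x : ℤ) (L : List ℤ) :
    hjMatProd (x :: L) 0 0 = x * hjMatProd L 0 0 - hjMatProd L 1 0 := by
  simp [hjMat, mul_apply, Fin.sum_univ_two, sub_eq_add_neg]

lemma hjMatProd_cons_one_zero (x : ℤ) (L : List ℤ) :
    hjMatProd (x :: L) 1 0 = hjMatProd L 0 0 := by
  simp [hjMat, mul_apply, Fin.sum_univ_two]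

lemma det_hjMatProd (L : List ℤ) : (hjMatProd L).det = 1 := by
  induction L with
  | nil => simp
  | cons x L ih => rw [hjMatProd_cons, det_mul, ih]; simp [hjMat]

lemma hjMatProd_reverse (L : List ℤ) :
    hjMatProd L.reverse =
      !![hjMatProd L 0 0, -hjMatProd L 1 0; -hjMatProd L 0 1, hjMatProd L 1 1] := by
  induction L with
  | nil => simp [one_fin_two]
  | cons x L ih =>
    rw [List.reverse_cons, hjMatProd_append, ih]
    ext i j
    fin_cases i <;> fin_cases j <;> simp [hjMat, mul_apply, Fin.sum_univ_two, mul_comm, add_comm]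

lemma hjMatProd_splice (A B : List ℤ) (y x : ℤ) :
    hjMatProd (A ++ (y + x) :: B.reverse) =
      -(hjMatProd (A ++ [y]) * hjMat 0 * hjMatProd (B ++ [x]).reverse) := by
  have hfuse : hjMat (y + x) = -(hjMat y * hjMat 0 * hjMat x) := by simp [hjMat]
  simp [hfuse, Matrix.mul_assoc]

lemma hjMatProd_one_zero_bounds {L : List ℤ} (hL : ∀ e ∈ L, 2 ≤ e) :
    0 ≤ hjMatProd L 1 0 ∧ hjMatProd L 1 0 < hjMatProd L 0 0 := by
  induction L with
  | nil => simp
  | cons x L ih =>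
    rw [List.forall_mem_cons] at hL
    obtain ⟨h0, h1⟩ := ih hL.2
    rw [hjMatProd_cons_zero_zero, hjMatProd_cons_one_zero]
    constructor <;> nlinarith

lemma hjMatProd_one_zero_pos {L : List ℤ} (hL : ∀ e ∈ L, 2 ≤ e) (hne : L ≠ []) :
    0 < hjMatProd L 1 0 := by
  obtain ⟨x, L, rfl⟩ := List.exists_cons_of_ne_nil hne
  have := hjMatProd_one_zero_bounds (List.forall_mem_cons.1 hL).2
  rw [hjMatProd_cons_one_zero]
  omega

lemma hjMatProd_zero_one_bounds {L : List ℤ} (hL : ∀ e ∈ L, 2 ≤ e) (hne : L ≠ []) :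
    0 < -hjMatProd L 0 1 ∧ -hjMatProd L 0 1 < hjMatProd L 0 0 := by
  have hL' : ∀ e ∈ L.reverse, 2 ≤ e := fun e he => hL e (List.mem_reverse.1 he)
  have hpos := hjMatProd_one_zero_pos hL' (List.reverse_ne_nil_iff.2 hne)
  have hlt := (hjMatProd_one_zero_bounds hL').2
  simp only [hjMatProd_reverse, of_apply, cons_val', cons_val_zero, cons_val_one,
    empty_val', cons_val_fin_one] at hpos hlt
  omega

-- For `L = []` this reads `0 = 1 / 0`, which holds in `ℚ`.
lemma hjVal_eq_div {L : List ℤ} (hL : ∀ e ∈ L, 2 ≤ e) :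
    hjVal L = (hjMatProd L 0 0 : ℚ) / hjMatProd L 1 0 := by
  induction L with
  | nil => simp [hjVal]
  | cons x L ih =>
    rw [List.forall_mem_cons] at hL
    have hp : (hjMatProd L 0 0 : ℚ) ≠ 0 := by
      have := hjMatProd_one_zero_bounds hL.2
      exact_mod_cast (by omega : hjMatProd L 0 0 ≠ 0)
    rw [hjVal_cons, ih hL.2, hjMatProd_cons_zero_zero, hjMatProd_cons_one_zero]
    push_cast
    field_simp

lemma inv_hjVal_mem_Ico {L : List ℤ} (hL : ∀ e ∈ L, 2 ≤ e) :
    0 ≤ (hjVal L)⁻¹ ∧ (hjVal L)⁻¹ < 1 := by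
  obtain ⟨h0, h1⟩ := hjMatProd_one_zero_bounds hL
  have hp : (0 : ℚ) < hjMatProd L 0 0 := by exact_mod_cast (by omega : 0 < hjMatProd L 0 0)
  rw [hjVal_eq_div hL, inv_div]
  exact ⟨by positivity, (div_lt_one hp).2 (by exact_mod_cast h1)⟩

lemma ceil_hjVal_cons {x : ℤ} {L : List ℤ} (hL : ∀ e ∈ L, 2 ≤ e) : ⌈hjVal (x :: L)⌉ = x := by
  obtain ⟨h0, h1⟩ := inv_hjVal_mem_Ico hL
  rw [Int.ceil_eq_iff, hjVal_cons]
  constructor <;> linarith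

lemma eq_of_hjVal_eq {L₁ L₂ : List ℤ} (h₁ : ∀ e ∈ L₁, 2 ≤ e) (h₂ : ∀ e ∈ L₂, 2 ≤ e)
    (hv : hjVal L₁ = hjVal L₂) : L₁ = L₂ := by
  induction L₁ generalizing L₂ with
  | nil =>
    cases L₂ with
    | nil => rfl
    | cons y L₂ =>
      rw [List.forall_mem_cons] at h₂
      have hy := ceil_hjVal_cons (x := y) h₂.2
      rw [← hv] at hy
      simp only [hjVal, Int.ceil_zero] at hy
      omega
  | cons x L₁ ih =>
    rw [List.forall_mem_cons] at h₁
    cases L₂ with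
    | nil =>
      have hx := ceil_hjVal_cons (x := x) h₁.2
      rw [hv] at hx
      simp only [hjVal, Int.ceil_zero] at hx
      omega
    | cons y L₂ =>
      rw [List.forall_mem_cons] at h₂
      obtain rfl : x = y := by
        rw [← ceil_hjVal_cons (x := x) h₁.2, hv, ceil_hjVal_cons h₂.2]
      rw [hjVal_cons, hjVal_cons, sub_right_inj, _root_.inv_inj] at hv
      rw [ih h₁.2 h₂.2 hv]

lemma IsHJ.unique {m q : ℤ} {L₁ L₂ : List ℤ} (h₁ : IsHJ m q L₁) (h₂ : IsHJ m q L₂) : L₁ = L₂ :=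
  eq_of_hjVal_eq h₁.1 h₂.1 (h₁.2.trans h₂.2.symm)

lemma isHJ_of_hjMatProd {m q : ℤ} {L : List ℤ} (hL : ∀ e ∈ L, 2 ≤ e)
    (hm : hjMatProd L 0 0 = m) (hq : hjMatProd L 1 0 = q) : IsHJ m q L :=
  ⟨hL, by rw [hjVal_eq_div hL, hm, hq]⟩

lemma IsHJ.ne_nil {m q : ℤ} {L : List ℤ} (h : IsHJ m q L) (hm : 0 < m) (hq : 0 < q) :
    L ≠ [] := by
  rintro rfl
  have hv := h.2
  simp only [hjVal] at hv
  have : (0 : ℚ) < m / q := by positivity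
  linarith

lemma IsHJ.hjMatProd_col {m q : ℤ} {L : List ℤ} (h : IsHJ m q L) (hm : 0 < m) (hq : 0 < q)
    (hmq : Int.gcd m q = 1) : hjMatProd L 0 0 = m ∧ hjMatProd L 1 0 = q := by
  have hr := hjMatProd_one_zero_pos h.1 (h.ne_nil hm hq)
  have hdet := det_hjMatProd L
  rw [det_fin_two] at hdet
  have hpr : Int.gcd (hjMatProd L 0 0) (hjMatProd L 1 0) = 1 :=
    Int.isCoprime_iff_gcd_eq_one.1 ⟨hjMatProd L 1 1, -hjMatProd L 0 1, by linear_combination hdet⟩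
  exact Rat.div_int_inj hr hq hpr hmq ((hjVal_eq_div h.1).symm.trans h.2)

lemma IsHJ.hjMatProd_eq {m q : ℤ} {L : List ℤ} (h : IsHJ m q L) (hm : 0 < m) (hq : 0 < q)
    (hmq : Int.gcd m q = 1) :
    ∃ b d, hjMatProd L = !![m, -b; q, d] ∧ m * d + b * q = 1 ∧ 0 < b ∧ b < m := by
  obtain ⟨h00, h10⟩ := h.hjMatProd_col hm hq hmq
  obtain ⟨hb, hbm⟩ := hjMatProd_zero_one_bounds h.1 (h.ne_nil hm hq)
  have hdet := det_hjMatProd L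
  rw [det_fin_two] at hdet
  refine ⟨-hjMatProd L 0 1, hjMatProd L 1 1, ?_, ?_, hb, h00 ▸ hbm⟩
  · rw [← h00, ← h10, neg_neg]
    exact eta_fin_two _
  · rw [← h00, ← h10]
    linear_combination hdet

-- `b` and `c` are the inverses of `a` and `-a` modulo `n`, taken in `(0, n)`.
lemma inv_mod_add_inv_mod_sub_eq {n a b c d d' : ℤ} (hna : Int.gcd n a = 1)
    (hb : n * d + b * a = 1) (hc : n * d' + c * (n - a) = 1)
    (hb0 : 0 < b) (hbn : b < n) (hc0 : 0 < c) (hcn : c < n) : b + c = n := by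
  have hdvd : n ∣ (b + c) * a := ⟨d' + c - d, by linear_combination hb - hc⟩
  have := Int.eq_zero_of_abs_lt_dvd
    (dvd_sub ((Int.isCoprime_iff_gcd_eq_one.2 hna).dvd_of_dvd_mul_right hdvd) dvd_rfl)
    (abs_lt.2 ⟨by omega, by omega⟩)
  omega

lemma isHJ_append_two_reverse {n a bY dY bX dX : ℤ} {Y X : List ℤ}
    (hY : ∀ e ∈ Y, 2 ≤ e) (hX : ∀ e ∈ X, 2 ≤ e)
    (hMY : hjMatProd Y = !![n, -bY; a, dY]) (hMX : hjMatProd X = !![n, -bX; n - a, dX])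
    (hdetX : n * dX + bX * (n - a) = 1) (hsum : bY + bX = n) :
    IsHJ (n ^ 2) (n ^ 2 - n * a + 1) (X ++ 2 :: Y.reverse) := by
  refine isHJ_of_hjMatProd ?_ ?_ ?_
  · simp only [List.mem_append, List.mem_cons, List.mem_reverse]
    rintro e (he | rfl | he)
    exacts [hX e he, le_rfl, hY e he]
  all_goals
    simp only [hjMatProd_append, hjMatProd_cons, hjMatProd_reverse, hMX, hMY, hjMat, mul_apply,
      Fin.sum_univ_two, of_apply, cons_val', cons_val_zero, cons_val_one, cons_val_fin_one]
  · linear_combination (-n) * hsum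
  · linear_combination hdetX - (n - a) * hsum

lemma isHJ_splice {n a bY dY bX dX y x : ℤ} {Y X : List ℤ}
    (hY : ∀ e ∈ Y ++ [y], 2 ≤ e) (hX : ∀ e ∈ X ++ [x], 2 ≤ e)
    (hMY : hjMatProd (Y ++ [y]) = !![n, -bY; a, dY])
    (hMX : hjMatProd (X ++ [x]) = !![n, -bX; n - a, dX])
    (hdetY : n * dY + bY * a = 1) (hsum : bY + bX = n) :
    IsHJ (n ^ 2) (n * a - 1) (Y ++ (y + x) :: X.reverse) := by
  refine isHJ_of_hjMatProd ?_ ?_ ?_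
  · have hy := hY y (by simp)
    have hx := hX x (by simp)
    simp only [List.mem_append, List.mem_cons, List.mem_reverse]
    rintro e (he | rfl | he)
    exacts [hY e (by simp [he]), by omega, hX e (by simp [he])]
  all_goals
    rw [hjMatProd_splice, hjMatProd_reverse, hMX, hMY]
    simp only [hjMat, neg_apply, mul_apply, Fin.sum_univ_two, of_apply, cons_val', cons_val_zero,
      cons_val_one, cons_val_fin_one]
  · linear_combination n * hsum
  · linear_combination a * hsum - hdetY

/-- For a Wahl chain `W` of `n²/(na-1)` with `n/a = [y₁,…,y_v]` and
`n/(n-a) = [x₁,…,x_u]`, the dual chain of `W` is `[x₁,…,x_u,2,y_v,…,y₁]` and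
`W = [y₁,…,y_{v-1},y_v+x_u,x_{u-1},…,x₁]`. -/
theorem stmt3 (n a : ℤ) (W Y X : List ℤ)
    (ha : 0 < a) (han : a < n) (hcop : Int.gcd n a = 1)
    (hW : IsWahlChain n a W) (hY : IsHJ n a Y) (hX : IsHJ n (n - a) X) :
    IsHJ (n ^ 2) (n ^ 2 - n * a + 1) (X ++ 2 :: Y.reverse) ∧
    W = Y.dropLast ++ (Y.getLast! + X.getLast!) :: X.dropLast.reverse := by
  obtain ⟨bY, dY, hMY, hdetY, hbY, hbYn⟩ := hY.hjMatProd_eq (by omega) ha hcop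
  obtain ⟨bX, dX, hMX, hdetX, hbX, hbXn⟩ :=
    hX.hjMatProd_eq (by omega) (by omega) (by rwa [Int.gcd_self_sub_right])
  have hsum := inv_mod_add_inv_mod_sub_eq hcop hdetY hdetX hbY hbYn hbX hbXn
  refine ⟨isHJ_append_two_reverse hY.1 hX.1 hMY hMX hdetX hsum, ?_⟩
  obtain ⟨Y, y, rfl⟩ : ∃ Y' y, Y = Y' ++ [y] :=
    ⟨_, _, (List.dropLast_append_getLast (hY.ne_nil (by omega) ha)).symm⟩
  obtain ⟨X, x, rfl⟩ : ∃ X' x, X = X' ++ [x] :=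
    ⟨_, _, (List.dropLast_append_getLast (hX.ne_nil (by omega) (by omega))).symm⟩
  have hlast (L : List ℤ) (e : ℤ) : (L ++ [e]).getLast! = e := by simp
  rw [List.dropLast_concat, List.dropLast_concat, hlast, hlast]
  exact hW.2.2.2.unique (isHJ_splice hY.1 hX.1 hMY hMX hdetY hsum)
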